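/- arXiv:1605.02628 — 2 statements merged into one kernel-verified Lean document; each statement's English description precedes it below -/
import Mathlib

section
/- The genus of a connected fatgraph, defined by g = 1 − (v − e + r)/2 where r is the number of cycles of α∘σ, is a nonnegative integer. -/
/-- The number of cycles of a permutation (including fixed points as trivial cycles). -/
def cycleCount {H : Type*} [Fintype H] [DecidableEq H] (f : Equiv.Perm H) : ℕ :=
  f.cycleType.card + (Fintype.card H - f.support.card)

/-!
Write `c(p)` for the number of cycles of a permutation `p` of an `n`-element set. Since
`sign p = (-1) ^ (n - c(p))`, the sum `c(a) + c(b) + c(ab)` has the parity of `n`; and it is at most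
`n + 2k`, where `k` is the number of orbits of `⟨a, b⟩`. For a fatgraph `k = 1` and `n = 2e`, so
`v - e + r` is even and at most `2`.

The inequality is proved by induction on `n - c(b)`: write `b = b' τ` with `τ = (i b(i))`, so that
`b'` has one cycle more than `b`. Multiplying by a transposition `(i j)` changes `c` by `+1` or `-1`
according to whether `i` and `j` lie in one cycle, and adding `(i j)` to a generating set lowers
the number of orbits by `0` or `1` according to whether `i` and `j` lie in one orbit. As
`⟨a, b, τ⟩ = ⟨a, b', τ⟩`, comparing both sides of the inequality for `(a, b)` and `(a, b')` closes
the induction. The `±1` rule itself follows from counting the orbits of `⟨p, τ⟩ = ⟨pτ, τ⟩` and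
the parity of `c`.
-/

open Equiv Equiv.Perm MulAction

theorem Subgroup.closure_insert_mul_right {G : Type*} [Group G] {g : G} {S : Set G}
    (hg : g ∈ closure S) (p : G) : closure (insert (p * g) S) = closure (insert p S) := by
  have hS {q : G} : S ⊆ closure (insert q S) := (Set.subset_insert _ _).trans subset_closure
  have hq {q : G} : q ∈ closure (insert q S) := subset_closure (Set.mem_insert _ _)
  have hg' {q : G} : g ∈ closure (insert q S) := closure_mono (Set.subset_insert _ _) hg
  apply le_antisymm <;> rw [closure_le, Set.insert_subset_iff]
  · exact ⟨mul_mem hq hg', hS⟩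
  · refine ⟨?_, hS⟩
    simpa only [mul_inv_cancel_right, SetLike.mem_coe] using mul_mem (hq (q := p * g)) (inv_mem hg')

namespace Setoid

variable {α : Type*} {r s : Setoid α}

lemma swap_apply_rel [DecidableEq α] {i j : α} (hij : r i j) (x : α) : r (swap i j x) x := by
  rcases eq_or_ne x i with rfl | hi
  · rw [swap_apply_left]
    exact r.symm' hij
  rcases eq_or_ne x j with rfl | hj
  · rw [swap_apply_right]
    exact hij
  · rw [swap_apply_of_ne_of_ne hi hj]

lemma map_of_le_surjective (h : r ≤ s) : Function.Surjective (map_of_le h) :=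
  Quotient.ind fun a => ⟨Quotient.mk r a, rfl⟩

variable [Finite α]

lemma card_quotient_le_of_le (h : r ≤ s) : Nat.card (Quotient s) ≤ Nat.card (Quotient r) :=
  Nat.card_le_card_of_surjective _ (map_of_le_surjective h)

lemma card_quotient_lt_of_le {x y : α} (h : r ≤ s) (hs : s x y) (hr : ¬ r x y) :
    Nat.card (Quotient s) < Nat.card (Quotient r) := by
  refine (card_quotient_le_of_le h).lt_of_ne fun hcard => hr (Quotient.exact ?_)
  have hbij := (Nat.bijective_iff_surjective_and_card _).2 ⟨map_of_le_surjective h, hcard.symm⟩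
  exact hbij.injective (Quotient.sound hs)

end Setoid

section Orbits

variable {H : Type*} {S T : Set (Perm H)}

noncomputable def orbitCount (S : Set (Perm H)) : ℕ :=
  Nat.card (orbitRel.Quotient (Subgroup.closure S) H)

lemma orbitRel_closure_apply_left {p : Perm H} (hp : p ∈ Subgroup.closure S) (x : H) :
    orbitRel (Subgroup.closure S) H (p x) x :=
  ⟨⟨p, hp⟩, rfl⟩

lemma orbitRel_closure_of_sameCycle {p : Perm H} (hp : p ∈ Subgroup.closure S) {i j : H}
    (h : p.SameCycle i j) : orbitRel (Subgroup.closure S) H i j := by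
  obtain ⟨k, rfl⟩ := h
  exact Setoid.symm' _ (orbitRel_closure_apply_left (zpow_mem hp k) i)

lemma orbitRel_closure_le {r : Setoid H} (h : ∀ p ∈ S, ∀ x, r (p x) x) :
    orbitRel (Subgroup.closure S) H ≤ r := by
  suffices hcl : ∀ g ∈ Subgroup.closure S, ∀ x, r (g x) x by
    rintro _ x ⟨⟨g, hg⟩, rfl⟩
    exact hcl g hg x
  intro g hg
  induction hg using Subgroup.closure_induction with
  | mem p hp => exact h p hp
  | one => exact r.refl'
  | mul p q _ _ ihp ihq => exact fun x => r.trans' (ihp (q x)) (ihq x)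
  | inv p _ ihp => exact fun x => r.symm' (by simpa using ihp (p⁻¹ x))

lemma orbitRel_closure_mono (hST : S ⊆ T) :
    orbitRel (Subgroup.closure S) H ≤ orbitRel (Subgroup.closure T) H :=
  orbitRel_closure_le fun _ hp => orbitRel_closure_apply_left (Subgroup.subset_closure (hST hp))

lemma orbitCount_anti [Finite H] (hST : S ⊆ T) : orbitCount T ≤ orbitCount S :=
  Setoid.card_quotient_le_of_le (orbitRel_closure_mono hST)

lemma orbitCount_pair_mul_right (g p : Perm H) : orbitCount {g, p * g} = orbitCount {g, p} := by
  rw [orbitCount, orbitCount, Set.pair_comm, Set.pair_comm _ p,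
    Subgroup.closure_insert_mul_right (Subgroup.subset_closure (Set.mem_singleton _))]

variable [DecidableEq H]

lemma orbitCount_insert_swap_of_rel {i j : H} (hij : orbitRel (Subgroup.closure S) H i j) :
    orbitCount (insert (swap i j) S) = orbitCount S := by
  have hle : orbitRel (Subgroup.closure (insert (swap i j) S)) H ≤
      orbitRel (Subgroup.closure S) H := by
    refine orbitRel_closure_le fun p hp x => ?_
    rcases Set.mem_insert_iff.mp hp with rfl | hp
    · exact Setoid.swap_apply_rel hij x
    · exact orbitRel_closure_apply_left (Subgroup.subset_closure hp) x
  unfold orbitCount orbitRel.Quotient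
  rw [le_antisymm hle (orbitRel_closure_mono (Set.subset_insert _ _))]

lemma orbitCount_insert_swap_mul_apply (a b : Perm H) (i : H) :
    orbitCount {swap i (b i), a, b * swap i (b i)} = orbitCount {a, b} := by
  set τ := swap i (b i)
  have hτ : τ ∈ Subgroup.closure {τ, a} := Subgroup.subset_closure (Set.mem_insert _ _)
  have hset (c : Perm H) : ({τ, a, c} : Set (Perm H)) = insert c {τ, a} := by
    rw [Set.pair_comm a c, Set.insert_comm]
  rw [orbitCount, hset, Subgroup.closure_insert_mul_right hτ, ← hset, ← orbitCount,
    orbitCount_insert_swap_of_rel]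
  exact Setoid.symm' _ (orbitRel_closure_apply_left
    (Subgroup.subset_closure (Set.mem_insert_of_mem _ (Set.mem_singleton b))) i)

variable [Finite H]

lemma orbitCount_insert_swap_lt {i j : H} (hij : ¬ orbitRel (Subgroup.closure S) H i j) :
    orbitCount (insert (swap i j) S) < orbitCount S := by
  have hji := orbitRel_closure_apply_left
    (Subgroup.subset_closure (Set.mem_insert (swap i j) S)) i
  rw [swap_apply_left] at hji
  exact Setoid.card_quotient_lt_of_le (orbitRel_closure_mono (Set.subset_insert _ _))
    (Setoid.symm' _ hji) hij

lemma orbitCount_le_orbitCount_insert_swap_add_one (i j : H) :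
    orbitCount S ≤ orbitCount (insert (swap i j) S) + 1 := by
  classical
  set r := orbitRel (Subgroup.closure S) H
  set s := orbitRel (Subgroup.closure (insert (swap i j) S)) H
  have hrs : r ≤ s := orbitRel_closure_mono (Set.subset_insert _ _)
  -- `s` only merges the `r`-classes of `i` and `j`, so redirecting the class of `i` to that
  -- of `j` is well defined on `s`-classes.
  let merge (q : Quotient r) : Quotient r := if q = ⟦i⟧ then ⟦j⟧ else q
  have hmerge : s ≤ Setoid.ker (merge ∘ Quotient.mk r) := by
    refine orbitRel_closure_le fun p hp x => ?_
    rcases Set.mem_insert_iff.mp hp with rfl | hp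
    · exact Setoid.swap_apply_rel (by simp [Setoid.ker_def, merge]) x
    · exact congrArg merge
        (Quotient.sound (orbitRel_closure_apply_left (Subgroup.subset_closure hp) x))
  have hunmerge (q : Quotient r) :
      Quotient.lift (merge ∘ Quotient.mk r) hmerge (Setoid.map_of_le hrs q) = merge q := by
    induction q using Quotient.ind; rfl
  let F (q : Quotient r) : Option (Quotient s) :=
    if q = ⟦i⟧ then none else some (Setoid.map_of_le hrs q)
  have hF : Function.Injective F := by
    intro q₁ q₂ h
    by_cases h₁ : q₁ = ⟦i⟧ <;> by_cases h₂ : q₂ = ⟦i⟧ <;>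
      simp only [F, h₁, h₂, if_true, if_false, reduceCtorEq, Option.some_inj] at h
    · rw [h₁, h₂]
    · simpa [hunmerge, merge, h₁, h₂] using congrArg (Quotient.lift _ hmerge) h
  simpa [orbitCount, Finite.card_option] using Nat.card_le_card_of_injective F hF

end Orbits

section Cycles

variable {H : Type*}

lemma orbitRel_closure_singleton (p : Perm H) :
    orbitRel (Subgroup.closure {p}) H = SameCycle.setoid p := by
  ext x y
  rw [← Subgroup.zpowers_eq_closure, orbitRel_apply, mem_orbit_iff, Subgroup.exists_zpowers]
  exact sameCycle_comm

variable [Fintype H] [DecidableEq H]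

lemma card_quotient_sameCycle (p : Perm H) :
    Nat.card (Quotient (SameCycle.setoid p)) = cycleCount p := by
  let Φ (x : H) : {c // c ∈ p.cycleFactorsFinset} ⊕ {x // x ∉ p.support} :=
    if hx : x ∈ p.support
    then .inl ⟨p.cycleOf x, cycleOf_mem_cycleFactorsFinset_iff.2 hx⟩ else .inr ⟨x, hx⟩
  have hker : Setoid.ker Φ = SameCycle.setoid p := by
    ext x y
    rw [Setoid.ker_def]
    by_cases hx : x ∈ p.support <;> by_cases hy : y ∈ p.support <;> simp only [Φ, hx, hy,
      dite_true, dite_false, Sum.inl.injEq, Sum.inr.injEq, Subtype.mk.injEq, reduceCtorEq]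
    · exact (sameCycle_iff_cycleOf_eq_of_mem_support hx hy).symm
    · exact iff_of_false not_false fun h => hy (h.mem_support_iff.1 hx)
    · exact iff_of_false not_false fun h => hx (h.mem_support_iff.2 hy)
    · exact ⟨fun h => h ▸ SameCycle.refl p x, fun h => h.eq_of_left (notMem_support.1 hx)⟩
  have hΦ : Function.Surjective Φ := by
    rintro (⟨c, hc⟩ | ⟨x, hx⟩)
    · obtain ⟨a, ha⟩ := (mem_cycleFactorsFinset_iff.1 hc).1.nonempty_support
      have hap : a ∈ p.support := mem_cycleFactorsFinset_support_le hc ha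
      exact ⟨a, by simp only [Φ, hap, dite_true, cycle_is_cycleOf ha hc]⟩
    · exact ⟨x, by simp only [Φ, hx, dite_false]⟩
  rw [← hker, Nat.card_congr (Setoid.quotientKerEquivOfSurjective Φ hΦ)]
  rw [Nat.card_sum, Nat.card_eq_fintype_card, Nat.card_eq_fintype_card,
    Fintype.card_subtype_compl, Fintype.card_coe, Fintype.card_coe, cycleCount, cycleType_def,
    Multiset.card_map, Finset.card_val]

lemma orbitCount_singleton (p : Perm H) : orbitCount {p} = cycleCount p := by
  unfold orbitCount orbitRel.Quotient
  rw [orbitRel_closure_singleton, card_quotient_sameCycle]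

lemma cycleCount_one : cycleCount (1 : Perm H) = Fintype.card H := by
  simp [cycleCount]

lemma cycleCount_le_card (p : Perm H) : cycleCount p ≤ Fintype.card H := by
  rw [← orbitCount_singleton, ← Nat.card_eq_fintype_card]
  exact Nat.card_le_card_of_surjective _ Quotient.mk''_surjective

lemma sign_eq_negOnePow_cycleCount (p : Perm H) :
    sign p = ((Fintype.card H : ℤ) - cycleCount p).negOnePow := by
  have := p.sum_cycleType_le
  rw [sign_of_cycleType, ← zpow_natCast, ← Int.negOnePow_def, Int.negOnePow_eq_iff, cycleCount,
    ← sum_cycleType]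
  exact ⟨p.cycleType.card, by omega⟩

lemma cycleCount_mul_add_mod_two (p q : Perm H) :
    (cycleCount (p * q) + cycleCount p + cycleCount q + Fintype.card H) % 2 = 0 := by
  have h := sign_mul p q
  rw [sign_eq_negOnePow_cycleCount, sign_eq_negOnePow_cycleCount, sign_eq_negOnePow_cycleCount,
    ← Int.negOnePow_add, Int.negOnePow_eq_iff, Int.even_iff] at h
  omega

lemma cycleCount_mul_swap_add_cycleCount_mod_two {i j : H} (hij : i ≠ j) (p : Perm H) :
    (cycleCount (p * swap i j) + cycleCount p) % 2 = 1 := by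
  have h := sign_mul p (swap i j)
  rw [sign_swap hij, mul_neg_one, sign_eq_negOnePow_cycleCount, sign_eq_negOnePow_cycleCount,
    ← Int.negOnePow_succ, Int.negOnePow_eq_iff, Int.even_iff] at h
  omega

lemma cycleCount_mul_swap_of_sameCycle {p : Perm H} {i j : H} (hij : i ≠ j)
    (h : p.SameCycle i j) : cycleCount (p * swap i j) = cycleCount p + 1 := by
  have hp : orbitCount {swap i j, p} = cycleCount p := by
    rw [orbitCount_insert_swap_of_rel (by rwa [orbitRel_closure_singleton]), orbitCount_singleton]
  have hle := orbitCount_anti (Set.subset_insert (swap i j) {p * swap i j})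
  have hge := orbitCount_le_orbitCount_insert_swap_add_one (S := {p * swap i j}) i j
  have hpar := cycleCount_mul_swap_add_cycleCount_mod_two hij p
  rw [orbitCount_pair_mul_right, hp, orbitCount_singleton] at hle hge
  omega

lemma cycleCount_mul_swap_of_not_sameCycle {p : Perm H} {i j : H} (h : ¬ p.SameCycle i j) :
    cycleCount (p * swap i j) + 1 = cycleCount p := by
  have hij : i ≠ j := fun hij => h (hij ▸ SameCycle.refl p i)
  have hrel : ¬ orbitRel (Subgroup.closure {p}) H i j := by rwa [orbitRel_closure_singleton]
  have hlt := orbitCount_insert_swap_lt hrel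
  have hp := orbitCount_le_orbitCount_insert_swap_add_one (S := {p}) i j
  have hle := orbitCount_anti (Set.subset_insert (swap i j) {p * swap i j})
  have hge := orbitCount_le_orbitCount_insert_swap_add_one (S := {p * swap i j}) i j
  have hpar := cycleCount_mul_swap_add_cycleCount_mod_two hij p
  rw [orbitCount_pair_mul_right] at hle hge
  rw [orbitCount_singleton] at hlt hp hle hge
  omega

lemma cycleCount_mul_swap_le {p : Perm H} {i j : H} (hij : i ≠ j) :
    cycleCount (p * swap i j) ≤ cycleCount p + 1 := by
  by_cases h : p.SameCycle i j
  · exact (cycleCount_mul_swap_of_sameCycle hij h).le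
  · have := cycleCount_mul_swap_of_not_sameCycle h
    omega

end Cycles

section Genus

variable {H : Type*} [Fintype H] [DecidableEq H]

theorem cycleCount_add_cycleCount_add_cycleCount_mul_le (a b : Perm H) :
    cycleCount a + cycleCount b + cycleCount (a * b) ≤ Fintype.card H + 2 * orbitCount {a, b} := by
  by_cases hb : b = 1
  · have ha : orbitCount {a, 1} = cycleCount a := by
      rw [← orbitCount_singleton, orbitCount, orbitCount, Set.pair_comm,
        Subgroup.closure_insert_one]
    rw [hb, mul_one, cycleCount_one, ha]
    omega
  obtain ⟨i, hi⟩ : ∃ i, b i ≠ i := not_forall.1 fun h => hb (Equiv.ext h)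
  set τ := swap i (b i)
  have hb' : cycleCount (b * τ) = cycleCount b + 1 :=
    cycleCount_mul_swap_of_sameCycle hi.symm (sameCycle_apply_right.2 (SameCycle.refl b i))
  have hab : a * b = a * (b * τ) * τ := by simp [τ, mul_assoc]
  have hk : orbitCount {τ, a, b * τ} = orbitCount {a, b} := orbitCount_insert_swap_mul_apply a b i
  have ih := cycleCount_add_cycleCount_add_cycleCount_mul_le a (b * τ)
  by_cases hrel : orbitRel (Subgroup.closure {a, b * τ}) H i (b i)
  · rw [orbitCount_insert_swap_of_rel hrel] at hk
    have hsplit : cycleCount (a * b) ≤ cycleCount (a * (b * τ)) + 1 :=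
      hab ▸ cycleCount_mul_swap_le hi.symm
    omega
  · have hmerge : cycleCount (a * b) + 1 = cycleCount (a * (b * τ)) := by
      rw [hab]
      exact cycleCount_mul_swap_of_not_sameCycle fun h => hrel (orbitRel_closure_of_sameCycle
        (mul_mem (Subgroup.subset_closure (Set.mem_insert _ _))
          (Subgroup.subset_closure (Set.mem_insert_of_mem _ (Set.mem_singleton _)))) h)
    have : orbitCount {a, b * τ} ≤ orbitCount {τ, a, b * τ} + 1 :=
      orbitCount_le_orbitCount_insert_swap_add_one i (b i)
    omega
termination_by Fintype.card H - cycleCount b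
decreasing_by
  have := cycleCount_le_card (b * τ)
  simp only [τ] at hb' this
  omega

lemma card_eq_two_mul_cycleCount {α : Perm H} (hinv : ∀ x, α (α x) = x) (hfpf : ∀ x, α x ≠ x) :
    Fintype.card H = 2 * cycleCount α := by
  have hsupp : α.support = Finset.univ := Finset.eq_univ_of_forall fun x => mem_support.2 (hfpf x)
  have hα : α ^ 2 = 1 := Equiv.ext fun x => hinv x
  have htwo : ∀ m ∈ α.cycleType, m = 2 := fun m hm =>
    have hm2 : m ∣ 2 := (dvd_of_mem_cycleType hm).trans (orderOf_dvd_of_pow_eq_one hα)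
    (Nat.le_of_dvd two_pos hm2).antisymm (two_le_of_mem_cycleType hm)
  rw [← Finset.card_univ, ← hsupp, ← sum_cycleType, Multiset.eq_replicate_of_mem htwo, cycleCount,
    hsupp]
  simp [mul_comm]

end Genus

theorem fatgraph_genus_nonneg_integer_general {H : Type*} [Fintype H] [DecidableEq H]
    (σ α : Equiv.Perm H) (hinv : ∀ x, α (α x) = x) (hfpf : ∀ x, α x ≠ x)
    (hconn : ∀ x y : H, ∃ p ∈ Subgroup.closure ({σ, α} : Set (Equiv.Perm H)), p x = y) :
    ∃ g : ℕ, (cycleCount σ : ℤ) - cycleCount α + cycleCount (α * σ) = 2 - 2 * g := by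
  have hconn' : orbitCount {α, σ} ≤ 1 := by
    rw [orbitCount, Set.pair_comm, Finite.card_le_one_iff_subsingleton]
    refine ⟨Quotient.ind₂ fun x y => Quotient.sound ?_⟩
    obtain ⟨p, hp, rfl⟩ := hconn y x
    exact orbitRel_closure_apply_left hp y
  have hle := cycleCount_add_cycleCount_add_cycleCount_mul_le α σ
  have hpar := cycleCount_mul_add_mod_two α σ
  have hn := card_eq_two_mul_cycleCount hinv hfpf
  refine ⟨(cycleCount α + 2 - cycleCount σ - cycleCount (α * σ)) / 2, ?_⟩
  omega

/-- For a connected fatgraph `(σ, α)` on a (nonempty) finite set of half-edges,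
with `α` a fixed-point-free involution and the group generated by `σ` and `α` acting
transitively, the genus defined by `g = 1 - (v - e + r)/2` is a nonnegative integer:
there exists `g : ℕ` with `v - e + r = 2 - 2g`, where `v`, `e`, `r` are the numbers of
cycles of `σ`, `α` and `α ∘ σ` respectively. -/
theorem fatgraph_genus_nonneg_integer {H : Type*} [Fintype H] [DecidableEq H] [Nonempty H]
    (σ α : Equiv.Perm H) (hinv : ∀ x, α (α x) = x) (hfpf : ∀ x, α x ≠ x)
    (hconn : ∀ x y : H, ∃ p ∈ Subgroup.closure ({σ, α} : Set (Equiv.Perm H)), p x = y) :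
    ∃ g : ℕ, (cycleCount σ : ℤ) - cycleCount α + cycleCount (α * σ) = 2 - 2 * g :=
  fatgraph_genus_nonneg_integer_general σ α hinv hfpf hconn
end

section
/- The number S₂(n) of RNA secondary structures on n vertices satisfies the recursion S₂(n) = S₂(n−1) + Σ_{j=0}^{n−3} S₂(n−2−j)·S₂(j) for n ≥ 3, with initial values S₂(n) = 1 for 0 ≤ n ≤ 2. -/
/-- `A` is an RNA secondary structure on `{1, …, n}`: arcs `(i,j)` with
`1 ≤ i`, `i + 2 ≤ j ≤ n` (no arcs between adjacent vertices), each vertex incident to at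
most one arc, and no two arcs cross. -/
def IsSecStr (n : ℕ) (A : Finset (ℕ × ℕ)) : Prop :=
  (∀ p ∈ A, 1 ≤ p.1 ∧ p.1 + 2 ≤ p.2 ∧ p.2 ≤ n) ∧
  (∀ p ∈ A, ∀ q ∈ A, p ≠ q →
    p.1 ≠ q.1 ∧ p.1 ≠ q.2 ∧ p.2 ≠ q.1 ∧ p.2 ≠ q.2) ∧
  (∀ p ∈ A, ∀ q ∈ A, ¬(p.1 < q.1 ∧ q.1 < p.2 ∧ p.2 < q.2))

/-- The number of RNA secondary structures on `n` vertices. -/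
noncomputable def S₂ (n : ℕ) : ℕ := Nat.card {A : Finset (ℕ × ℕ) // IsSecStr n A}

/-!
Classify the structures on `n + 2` vertices by the last vertex. If it is unpaired, deleting it
leaves an arbitrary structure on `n + 1` vertices. If it is paired with `j + 1`, then since arcs
do not cross, every other arc lies either left of `j + 1` or strictly under the arc
`(j + 1, n + 2)`; so the structure is the arc together with an arbitrary structure on the `j`
vertices to its left and a translated arbitrary structure on the `n - j` vertices under it.
-/

open Finset

namespace IsSecStr

variable {n m k : ℕ} {A B D : Finset (ℕ × ℕ)}

lemma of_subset (h : IsSecStr n A) (hBA : B ⊆ A) (hB : ∀ p ∈ B, p.2 ≤ m) : IsSecStr m B :=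
  ⟨fun p hp => ⟨(h.1 p (hBA hp)).1, (h.1 p (hBA hp)).2.1, hB p hp⟩,
    fun p hp q hq => h.2.1 p (hBA hp) q (hBA hq),
    fun p hp q hq => h.2.2 p (hBA hp) q (hBA hq)⟩

lemma eq_of_snd_eq (h : IsSecStr n A) {p q : ℕ × ℕ} (hp : p ∈ A) (hq : q ∈ A)
    (hpq : p.2 = q.2) : p = q := by
  by_contra hne
  exact (h.2.1 p hp q hq hne).2.2.2 hpq

lemma snd_lt_or_nested (h : IsSecStr n A) (hk : (k, n) ∈ A) {p : ℕ × ℕ} (hp : p ∈ A)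
    (hne : p ≠ (k, n)) : p.2 < k ∨ k < p.1 ∧ p.2 < n := by
  have hbound := h.1 p hp
  have hdisj := h.2.1 p hp _ hk hne
  have hcross := h.2.2 p hp _ hk
  simp only at hdisj hcross
  omega

lemma eq_insert_filter_union (h : IsSecStr n A) (hk : (k, n) ∈ A) :
    A = insert (k, n) (A.filter (·.2 < k) ∪ A.filter (k < ·.1)) := by
  ext p
  simp only [mem_insert, mem_union, mem_filter]
  constructor
  · intro hp
    by_cases hne : p = (k, n)
    · exact Or.inl hne
    · rcases h.snd_lt_or_nested hk hp hne with hleft | hinner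
      · exact Or.inr (Or.inl ⟨hp, hleft⟩)
      · exact Or.inr (Or.inr ⟨hp, hinner.1⟩)
  · rintro (rfl | ⟨hp, -⟩ | ⟨hp, -⟩) <;> assumption

lemma union (hB : IsSecStr n B) (hD : IsSecStr m D) (hnm : n ≤ m) (hBD : ∀ q ∈ D, n < q.1) :
    IsSecStr m (B ∪ D) := by
  refine ⟨?_, ?_, ?_⟩
  · intro p hp
    rcases mem_union.1 hp with hp | hp
    · have := hB.1 p hp; omega
    · exact hD.1 p hp
  · rintro p hp q hq hne
    rcases mem_union.1 hp with hp | hp <;> rcases mem_union.1 hq with hq | hq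
    · exact hB.2.1 p hp q hq hne
    · have := hB.1 p hp; have := hBD q hq; have := hD.1 q hq; omega
    · have := hBD p hp; have := hD.1 p hp; have := hB.1 q hq; omega
    · exact hD.2.1 p hp q hq hne
  · rintro p hp q hq
    rcases mem_union.1 hp with hp | hp <;> rcases mem_union.1 hq with hq | hq
    · exact hB.2.2 p hp q hq
    · have := hB.1 p hp; have := hBD q hq; omega
    · have := hBD p hp; have := hB.1 q hq; omega
    · exact hD.2.2 p hp q hq

lemma insert_arc (h : IsSecStr n A) (hk : 1 ≤ k) (hkn : k + 1 ≤ n)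
    (hsep : ∀ p ∈ A, p.2 < k ∨ k < p.1) : IsSecStr (n + 1) (insert (k, n + 1) A) := by
  refine ⟨?_, ?_, ?_⟩
  · rintro p hp
    rcases mem_insert.1 hp with rfl | hp
    · simp only; omega
    · have := h.1 p hp; omega
  · rintro p hp q hq hne
    rcases mem_insert.1 hp with rfl | hp <;> rcases mem_insert.1 hq with rfl | hq
    · exact absurd rfl hne
    · have := h.1 q hq; have := hsep q hq; simp only; omega
    · have := h.1 p hp; have := hsep p hp; simp only; omega
    · exact h.2.1 p hp q hq hne
  · rintro p hp q hq
    rcases mem_insert.1 hp with rfl | hp <;> rcases mem_insert.1 hq with rfl | hq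
    · simp
    · have := h.1 q hq; simp only; omega
    · have := hsep p hp; simp only; omega
    · exact h.2.2 p hp q hq

end IsSecStr

def shiftArcs (k : ℕ) (C : Finset (ℕ × ℕ)) : Finset (ℕ × ℕ) :=
  C.map ((addRightEmbedding k).prodMap (addRightEmbedding k))

section shiftArcs

variable {k m : ℕ} {C D : Finset (ℕ × ℕ)}

lemma mem_shiftArcs {p : ℕ × ℕ} : p ∈ shiftArcs k C ↔ ∃ q ∈ C, (q.1 + k, q.2 + k) = p := by
  simp [shiftArcs]

lemma shiftArcs_injective : Function.Injective (shiftArcs k) :=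
  map_injective _

lemma exists_shiftArcs_eq (hD : ∀ p ∈ D, k ≤ p.1 ∧ k ≤ p.2) : ∃ C, shiftArcs k C = D := by
  refine ⟨D.image fun p => (p.1 - k, p.2 - k), ?_⟩
  ext p
  simp only [mem_shiftArcs, mem_image]
  constructor
  · rintro ⟨-, ⟨q, hq, rfl⟩, rfl⟩
    have := hD q hq
    convert hq using 1
    ext <;> simp only <;> omega
  · intro hp
    have := hD p hp
    exact ⟨_, ⟨p, hp, rfl⟩, by ext <;> simp only <;> omega⟩

lemma isSecStr_shiftArcs (h : IsSecStr m C) : IsSecStr (m + k) (shiftArcs k C) := by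
  refine ⟨?_, ?_, ?_⟩
  · simp only [mem_shiftArcs]
    rintro _ ⟨p, hp, rfl⟩
    have := h.1 p hp
    simp only; omega
  · simp only [mem_shiftArcs]
    rintro _ ⟨p, hp, rfl⟩ _ ⟨q, hq, rfl⟩ hne
    have := h.2.1 p hp q hq (by rintro rfl; exact hne rfl)
    simp only; omega
  · simp only [mem_shiftArcs]
    rintro _ ⟨p, hp, rfl⟩ _ ⟨q, hq, rfl⟩
    have := h.2.2 p hp q hq
    simp only; omega

lemma IsSecStr.of_shiftArcs (h : IsSecStr (m + k) (shiftArcs k C)) (hC : ∀ p ∈ C, 1 ≤ p.1) :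
    IsSecStr m C := by
  have hmem : ∀ p ∈ C, (p.1 + k, p.2 + k) ∈ shiftArcs k C :=
    fun p hp => mem_shiftArcs.2 ⟨p, hp, rfl⟩
  refine ⟨?_, ?_, ?_⟩
  · intro p hp
    have := h.1 _ (hmem p hp)
    have := hC p hp
    simp only at *; omega
  · intro p hp q hq hne
    have := h.2.1 _ (hmem p hp) _ (hmem q hq) fun he => hne <| by
      simp only [Prod.mk.injEq, add_left_inj] at he
      exact Prod.ext he.1 he.2
    simp only at this; omega
  · intro p hp q hq
    have := h.2.2 _ (hmem p hp) _ (hmem q hq)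
    simp only at this; omega

end shiftArcs

def glueArc (a b : ℕ) (B C : Finset (ℕ × ℕ)) : Finset (ℕ × ℕ) :=
  insert (a + 1, a + b + 2) (B ∪ shiftArcs (a + 1) C)

section glueArc

variable {a b : ℕ} {B C : Finset (ℕ × ℕ)}

lemma IsSecStr.glueArc (hB : IsSecStr a B) (hC : IsSecStr b C) (hb : 1 ≤ b) :
    IsSecStr (a + b + 2) (glueArc a b B C) := by
  have hshift : IsSecStr (a + b + 1) (shiftArcs (a + 1) C) := by
    simpa only [show b + (a + 1) = a + b + 1 by omega] using isSecStr_shiftArcs (k := a + 1) hC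
  have hshift_fst : ∀ q ∈ shiftArcs (a + 1) C, a < q.1 := by
    simp only [mem_shiftArcs]
    rintro _ ⟨q, -, rfl⟩
    simp only; omega
  refine (hB.union hshift (by omega) hshift_fst).insert_arc (by omega) (by omega) ?_
  intro p hp
  rcases mem_union.1 hp with hp | hp
  · have := hB.1 p hp; omega
  · obtain ⟨q, hq, rfl⟩ := mem_shiftArcs.1 hp
    have := hC.1 q hq
    simp only; omega

lemma filter_glueArc_left (hB : IsSecStr a B) :
    (glueArc a b B C).filter (·.2 < a + 1) = B := by
  ext p
  simp only [glueArc, mem_filter, mem_insert, mem_union, mem_shiftArcs]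
  constructor
  · rintro ⟨rfl | hp | ⟨q, -, rfl⟩, hlt⟩
    · simp only at hlt; omega
    · exact hp
    · simp only at hlt; omega
  · intro hp
    have := hB.1 p hp
    exact ⟨Or.inr (Or.inl hp), by omega⟩

lemma filter_glueArc_right (hB : IsSecStr a B) (hC : IsSecStr b C) :
    (glueArc a b B C).filter (a + 1 < ·.1) = shiftArcs (a + 1) C := by
  ext p
  simp only [glueArc, mem_filter, mem_insert, mem_union]
  constructor
  · rintro ⟨rfl | hp | hp, hlt⟩
    · simp only at hlt; omega
    · have := hB.1 p hp; omega
    · exact hp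
  · intro hp
    obtain ⟨q, hq, rfl⟩ := mem_shiftArcs.1 hp
    have := hC.1 q hq
    exact ⟨Or.inr (Or.inr hp), by simp only; omega⟩

end glueArc

instance IsSecStr.decidablePred (n : ℕ) : DecidablePred (IsSecStr n) := fun _ => by
  unfold IsSecStr; infer_instance

def secStrs (n : ℕ) : Finset (Finset (ℕ × ℕ)) :=
  (range (n + 1) ×ˢ range (n + 1)).powerset.filter (IsSecStr n)

lemma mem_secStrs {n : ℕ} {A : Finset (ℕ × ℕ)} : A ∈ secStrs n ↔ IsSecStr n A := by
  simp only [secStrs, mem_filter, mem_powerset, and_iff_right_iff_imp]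
  intro h p hp
  have := h.1 p hp
  simp only [mem_product, mem_range]
  omega

lemma S₂_eq_card (n : ℕ) : S₂ n = #(secStrs n) := by
  rw [S₂, ← Nat.card_eq_finsetCard]
  exact Nat.card_congr (Equiv.subtypeEquivRight fun _ => mem_secStrs.symm)

lemma S₂_eq_one {n : ℕ} (hn : n ≤ 2) : S₂ n = 1 := by
  rw [S₂_eq_card, card_eq_one]
  refine ⟨∅, ext fun A => ?_⟩
  rw [mem_secStrs, mem_singleton]
  constructor
  · intro h
    refine eq_empty_iff_forall_notMem.2 fun p hp => ?_
    have := h.1 p hp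
    omega
  · rintro rfl
    exact ⟨by simp, by simp, by simp⟩

lemma filter_secStrs_succ_unpaired (n : ℕ) :
    (secStrs (n + 1)).filter (fun A => ∀ p ∈ A, p.2 ≠ n + 1) = secStrs n := by
  ext A
  simp only [mem_filter, mem_secStrs]
  constructor
  · rintro ⟨h, hunpaired⟩
    exact h.of_subset subset_rfl fun p hp => by have := h.1 p hp; have := hunpaired p hp; omega
  · intro h
    have hle : ∀ p ∈ A, p.2 ≤ n := fun p hp => (h.1 p hp).2.2
    exact ⟨h.of_subset subset_rfl fun p hp => by have := hle p hp; omega,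
      fun p hp => by have := hle p hp; omega⟩

lemma filter_secStrs_add_two_paired (n : ℕ) :
    (secStrs (n + 2)).filter (fun A => ¬ ∀ p ∈ A, p.2 ≠ n + 2) =
      (range n).biUnion fun j => (secStrs (n + 2)).filter ((j + 1, n + 2) ∈ ·) := by
  ext A
  simp only [mem_filter, mem_biUnion, mem_range, not_forall, not_not, exists_prop]
  constructor
  · rintro ⟨hA, ⟨i, l⟩, hp, rfl⟩
    have := (mem_secStrs.1 hA).1 _ hp
    refine ⟨i - 1, by simp only at this; omega, hA, ?_⟩
    convert hp using 2
    simp only at this; omega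
  · rintro ⟨j, -, hA, hp⟩
    exact ⟨hA, _, hp, rfl⟩

lemma card_filter_arc_mem_secStrs (a b : ℕ) (hb : 1 ≤ b) :
    #((secStrs (a + b + 2)).filter ((a + 1, a + b + 2) ∈ ·)) = S₂ a * S₂ b := by
  rw [S₂_eq_card, S₂_eq_card, ← card_product]
  symm
  refine card_nbij (fun BC => glueArc a b BC.1 BC.2) ?_ ?_ ?_
  · rintro ⟨B, C⟩ hBC
    simp only [coe_product, Set.mem_prod, mem_coe, mem_secStrs] at hBC
    exact mem_filter.2 ⟨mem_secStrs.2 (hBC.1.glueArc hBC.2 hb), mem_insert_self _ _⟩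
  · rintro ⟨B, C⟩ hBC ⟨B', C'⟩ hBC' he
    simp only [coe_product, Set.mem_prod, mem_coe, mem_secStrs] at hBC hBC' he
    have hleft := congrArg (filter (·.2 < a + 1)) he
    have hright := congrArg (filter (a + 1 < ·.1)) he
    rw [filter_glueArc_left hBC.1, filter_glueArc_left hBC'.1] at hleft
    rw [filter_glueArc_right hBC.1 hBC.2, filter_glueArc_right hBC'.1 hBC'.2] at hright
    rw [hleft, shiftArcs_injective hright]
  · intro A hA
    obtain ⟨hA, harc⟩ := mem_filter.1 hA
    rw [mem_secStrs] at hA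
    have hinner : ∀ p ∈ A.filter (a + 1 < ·.1), a + 1 < p.1 ∧ p.2 < a + b + 2 := by
      intro p hp
      obtain ⟨hp, hlt⟩ := mem_filter.1 hp
      have hne : p ≠ (a + 1, a + b + 2) := by rintro rfl; simp at hlt
      have := hA.snd_lt_or_nested harc hp hne
      omega
    obtain ⟨C, hC⟩ := exists_shiftArcs_eq (k := a + 1) (D := A.filter (a + 1 < ·.1))
      fun p hp => by have := hinner p hp; have := hA.1 p (mem_filter.1 hp).1; omega
    refine ⟨(A.filter (·.2 < a + 1), C), ?_, ?_⟩
    · simp only [coe_product, Set.mem_prod, mem_coe, mem_secStrs]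
      refine ⟨hA.of_subset (filter_subset _ _) fun p hp => by have := (mem_filter.1 hp).2; omega,
        IsSecStr.of_shiftArcs (k := a + 1) ?_ fun p hp => ?_⟩
      · rw [show b + (a + 1) = a + b + 1 by omega, hC]
        exact hA.of_subset (filter_subset _ _) fun p hp => by have := hinner p hp; omega
      · have := hinner _ (hC ▸ mem_shiftArcs.2 ⟨p, hp, rfl⟩)
        simp only at this; omega
    · dsimp only
      rw [glueArc, hC]
      exact (hA.eq_insert_filter_union harc).symm

theorem S₂_add_two (n : ℕ) :
    S₂ (n + 2) = S₂ (n + 1) + ∑ j ∈ range n, S₂ j * S₂ (n - j) := by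
  have hdisj : (range n : Set ℕ).PairwiseDisjoint
      fun j => (secStrs (n + 2)).filter ((j + 1, n + 2) ∈ ·) := by
    intro i _ j _ hij
    refine disjoint_left.2 fun A hi hj => hij ?_
    have := (mem_secStrs.1 (mem_filter.1 hi).1).eq_of_snd_eq (mem_filter.1 hi).2
      (mem_filter.1 hj).2 rfl
    simp only [Prod.mk.injEq, add_left_inj, and_true] at this
    exact this
  rw [S₂_eq_card, ← card_filter_add_card_filter_not (fun A => ∀ p ∈ A, p.2 ≠ n + 2),
    filter_secStrs_succ_unpaired, filter_secStrs_add_two_paired, card_biUnion hdisj,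
    ← S₂_eq_card]
  congr 1
  refine sum_congr rfl fun j hj => ?_
  have hn : n + 2 = j + (n - j) + 2 := by have := mem_range.1 hj; omega
  rw [hn]
  exact card_filter_arc_mem_secStrs j (n - j) (by have := mem_range.1 hj; omega)

/-- The number `S₂(n)` of RNA secondary structures on `n` vertices satisfies
`S₂(n) = S₂(n-1) + Σ_{j=0}^{n-3} S₂(n-2-j)·S₂(j)` for `n ≥ 3`, with `S₂(n) = 1` for
`0 ≤ n ≤ 2`. -/
theorem secondary_structure_recursion :
    S₂ 0 = 1 ∧ S₂ 1 = 1 ∧ S₂ 2 = 1 ∧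
    ∀ m : ℕ, S₂ (m + 3) =
      S₂ (m + 2) + ∑ j ∈ Finset.range (m + 1), S₂ (m + 1 - j) * S₂ j := by
  refine ⟨S₂_eq_one (by norm_num), S₂_eq_one (by norm_num), S₂_eq_one (by norm_num), fun m => ?_⟩
  rw [S₂_add_two]
  exact congrArg _ (sum_congr rfl fun j _ => mul_comm _ _)
end
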